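/- (Singleton bound for generalized Ferrers diagram rank metric codes.) Let F be an a×b Ferrers diagram and d ≥ 1. For each integer i with 0 ≤ i ≤ d−1, let v_i be the number of dots of F that are not contained in the first i rows and not contained in the rightmost d−1−i columns (i.e., v_i = |{(r,c) ∈ F : r > i and c ≤ b−(d−1−i)}|). If C is a set of a×b matrices over 𝔽_q all of whose entries at positions not in F are zero and rank(X−Y) ≥ d for all distinct X, Y ∈ C, then |C| ≤ q^(min_{0≤i≤d−1} v_i). -/

import Mathlib

/-!
Two codewords that agree on the `v_i` dots outside the first `i` rows and the last `d - 1 - i`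
columns differ by a matrix supported on those `i` rows and `d - 1 - i` columns, which has rank
at most `d - 1`. So these `v_i` entries determine a codeword, and `|C| ≤ q ^ v_i` for every `i`.
-/

open Finset

namespace Matrix

variable {m n K : Type*} [Fintype n] [Field K]

theorem rank_add_le (A B : Matrix m n K) : (A + B).rank ≤ A.rank + B.rank := by
  rw [rank, rank, rank, mulVecLin_add]
  exact (Submodule.finrank_mono (LinearMap.range_add_le _ _)).trans
    (Submodule.finrank_add_le_finrank_add_finrank _ _)

theorem rank_le_card_add_card_of_support [Fintype m] (Z : Matrix m n K) (s : Finset m)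
    (t : Finset n) (h : ∀ r c, Z r c ≠ 0 → r ∈ s ∨ c ∈ t) : Z.rank ≤ #s + #t := by
  classical
  let A : Matrix m n K := of fun r c => if r ∈ s then Z r c else 0
  let B : Matrix m n K := of fun r c => if r ∈ s then 0 else Z r c
  have hZ : Z = A + B := by
    ext r c
    by_cases hr : r ∈ s <;> simp [A, B, hr]
  have hA : A.rank ≤ #s := by
    refine A.rank_le_card_of_support_subset s (Function.support_subset_iff'.mpr fun r hr => ?_)
    exact funext fun c => by simp [A, Finset.mem_coe.not.mp hr]
  have hB : B.rank ≤ #t := by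
    rw [← rank_transpose]
    refine Bᵀ.rank_le_card_of_support_subset t (Function.support_subset_iff'.mpr fun c hc => ?_)
    refine funext fun r => ?_
    by_cases hr : r ∈ s
    · simp [B, hr]
    · simpa [B, hr] using not_imp_comm.mp (h r c) (by tauto)
  calc Z.rank = (A + B).rank := by rw [← hZ]
    _ ≤ A.rank + B.rank := rank_add_le A B
    _ ≤ #s + #t := add_le_add hA hB

end Matrix

theorem Matrix.card_le_card_pow_of_injOn_entries {m n K : Type*} [Fintype K]
    (C : Finset (Matrix m n K)) (S : Finset (m × n))
    (h : Set.InjOn (fun (X : Matrix m n K) (p : S) => X p.1.1 p.1.2) C) :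
    #C ≤ Fintype.card K ^ #S := by
  classical
  simpa using card_le_card_of_injOn _ (fun _ _ => mem_univ _) h

theorem Fin.card_filter_sub_le_val_le {b : ℕ} (k : ℕ) : #{c : Fin b | b - k ≤ c} ≤ k := by
  calc #{c : Fin b | b - k ≤ c} ≤ #{c : Fin b | c < k} :=
        card_le_card_of_injOn Fin.rev (fun c hc => by simp at hc ⊢; omega)
          (Fin.rev_injective.injOn)
    _ ≤ k := by rw [Fin.card_filter_val_lt]; exact min_le_right _ _

theorem card_le_card_pow_of_card_add_card_lt {m n K : Type*} [Fintype m] [Fintype n]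
    [DecidableEq m] [DecidableEq n] [Field K] [Fintype K] (d : ℕ) (F : Finset (m × n))
    (C : Finset (Matrix m n K))
    (hsupp : ∀ X ∈ C, ∀ r c, (r, c) ∉ F → X r c = 0)
    (hmin : ∀ X ∈ C, ∀ Y ∈ C, X ≠ Y → d ≤ (X - Y).rank)
    (s : Finset m) (t : Finset n) (hst : #s + #t < d) :
    #C ≤ Fintype.card K ^ #(F.filter fun p => p.1 ∉ s ∧ p.2 ∉ t) := by
  refine Matrix.card_le_card_pow_of_injOn_entries C _ fun X hX Y hY hXY => ?_
  by_contra hne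
  have hsub : ∀ r c, (X - Y) r c ≠ 0 → r ∈ s ∨ c ∈ t := by
    intro r c hrc
    by_contra! hout
    have hF : (r, c) ∈ F := by
      by_contra hF
      simp [hsupp X hX r c hF, hsupp Y hY r c hF] at hrc
    have hagree := congrFun hXY ⟨(r, c), mem_filter.mpr ⟨hF, hout⟩⟩
    exact hrc (sub_eq_zero.mpr hagree)
  have := (X - Y).rank_le_card_add_card_of_support s t hsub
  have := hmin X hX Y hY hne
  omega

/-- Singleton bound for generalized Ferrers diagram rank metric codes: with
`v_i = |{(r,c) ∈ F : r outside the first i rows, c outside the last d-1-i columns}|`,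
any set `C` of `a × b` matrices supported on the Ferrers diagram `F` with pairwise rank
distance at least `d` satisfies `|C| ≤ q^(min_{0 ≤ i ≤ d-1} v_i)`. -/
theorem singleton_bound_generalized_ferrers
    (q a b d : ℕ) (K : Type*) [Field K] [Fintype K]
    (hq : Fintype.card K = q)
    (hd : 1 ≤ d)
    (F : Finset (Fin a × Fin b))
    (C : Finset (Matrix (Fin a) (Fin b) K))
    (hsupp : ∀ X ∈ C, ∀ (r : Fin a) (c : Fin b), (r, c) ∉ F → X r c = 0)
    (hmin : ∀ X ∈ C, ∀ Y ∈ C, X ≠ Y → d ≤ (X - Y).rank) :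
    C.card ≤ q ^ ((Finset.range d).inf'
      (Finset.nonempty_range_iff.mpr (by omega))
      (fun i => (F.filter
        (fun p => i ≤ (p.1 : ℕ) ∧ (p.2 : ℕ) < b - (d - 1 - i))).card)) := by
  obtain ⟨i, hi_mem, hmin_i⟩ := exists_mem_eq_inf' (nonempty_range_iff.mpr (by omega : d ≠ 0))
    fun i => #(F.filter fun p : Fin a × Fin b =>
      i ≤ (p.1 : ℕ) ∧ (p.2 : ℕ) < b - (d - 1 - i))
  rw [hmin_i, ← hq]
  have hrows := (Fin.card_filter_val_lt (n := a) (m := i)).trans_le (min_le_right _ _)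
  have hcols := Fin.card_filter_sub_le_val_le (b := b) (d - 1 - i)
  have hi : i < d := mem_range.mp hi_mem
  convert card_le_card_pow_of_card_add_card_lt d F C hsupp hmin
    {r : Fin a | r < i} {c : Fin b | b - (d - 1 - i) ≤ c} (by omega) using 3
  ext p
  simp only [mem_filter, mem_univ, true_and, not_lt, not_le]
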